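/- (Pressure monotonicity along a path: the induction invariant in the proof of Lemma 2) Let (φ, ψ) and (φ̃, ψ̃) both satisfy the path equations, with ψ̃ 0 ≥ ψ 0, and suppose σ i * (φ̃ i − φ i) < 0 for every lossy edge i. Then ψ̃ j ≥ ψ j for every node j : Fin (k+1); moreover ψ̃ j > ψ j whenever ψ̃ 0 > ψ 0 or at least one edge i with i < j is lossy. -/

import Mathlib

/-- Path equations for a path gas network on nodes `Fin (k+1)`: pressures are
nonnegative; each lossy edge `i ∈ L` (joining nodes `i` and `i+1`, with orientation
sign `σ i`) satisfies the Weymouth equation; each compressor edge `i ∉ L` satisfies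
the compressor pressure relation in the direction indicated by `σ i`. -/
def PathEqs {k : ℕ} (σ : Fin k → ℝ) (L : Set (Fin k)) (a α : Fin k → ℝ)
    (φ : Fin k → ℝ) (ψ : Fin (k + 1) → ℝ) : Prop :=
  (∀ j, 0 ≤ ψ j) ∧
  (∀ i ∈ L, σ i * (ψ i.castSucc - ψ i.succ) = a i * Real.sign (φ i) * (φ i) ^ 2) ∧
  (∀ i ∉ L, (σ i = 1 → ψ i.succ = α i * ψ i.castSucc) ∧
    (σ i = -1 → ψ i.castSucc = α i * ψ i.succ))

lemma signsq_eq (x : ℝ) : Real.sign x * x ^ 2 = x * |x| := by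
  rcases lt_trichotomy x 0 with h | h | h
  · rw [Real.sign_of_neg h, abs_of_neg h]; ring
  · simp [h]
  · rw [Real.sign_of_pos h, abs_of_pos h]; ring

lemma signsq_strictMono : StrictMono (fun x : ℝ => Real.sign x * x ^ 2) := by
  intro x y hxy
  simp only [signsq_eq]
  rcases le_or_gt 0 x with hx | hx
  · rw [abs_of_nonneg hx, abs_of_nonneg (hx.trans hxy.le)]
    nlinarith
  · rw [abs_of_neg hx]
    rcases le_or_gt 0 y with hy | hy
    · rw [abs_of_nonneg hy]; nlinarith
    · rw [abs_of_neg hy]; nlinarith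

/-- Pressure monotonicity along a path: the induction invariant in the proof of
Lemma 2. -/
theorem path_pressure_monotone {k : ℕ}
    (σ : Fin k → ℝ) (hσ : ∀ i, σ i = 1 ∨ σ i = -1)
    (L : Set (Fin k)) (a α : Fin k → ℝ)
    (ha : ∀ i ∈ L, 0 < a i) (hα : ∀ i ∉ L, 0 < α i)
    (φ φ' : Fin k → ℝ) (ψ ψ' : Fin (k + 1) → ℝ)
    (hsol : PathEqs σ L a α φ ψ) (hsol' : PathEqs σ L a α φ' ψ')
    (h0 : ψ 0 ≤ ψ' 0)
    (hdev : ∀ i ∈ L, σ i * (φ' i - φ i) < 0) :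
    ∀ j : Fin (k + 1), ψ j ≤ ψ' j ∧
      ((ψ 0 < ψ' 0 ∨ ∃ i ∈ L, (i : ℕ) < (j : ℕ)) → ψ j < ψ' j) := by
  intro j
  induction j using Fin.induction with
  | zero =>
    refine ⟨h0, fun h => ?_⟩
    rcases h with h | ⟨i, _, hi⟩
    · exact h
    · simp at hi
  | succ i ih =>
    obtain ⟨hle, hstrict⟩ := ih
    have hσsq : σ i * σ i = 1 := by rcases hσ i with h | h <;> rw [h] <;> norm_num
    by_cases hiL : i ∈ L
    · -- lossy edge: strict increase automatically
      have W := hsol.2.1 i hiL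
      have W' := hsol'.2.1 i hiL
      have hs : ψ i.succ = ψ i.castSucc - σ i * (a i * Real.sign (φ i) * (φ i) ^ 2) := by
        have h2 : σ i * (σ i * (ψ i.castSucc - ψ i.succ)) =
            σ i * (a i * Real.sign (φ i) * (φ i) ^ 2) := by rw [W]
        rw [← mul_assoc, hσsq, one_mul] at h2
        linarith
      have hs' : ψ' i.succ = ψ' i.castSucc - σ i * (a i * Real.sign (φ' i) * (φ' i) ^ 2) := by
        have h2 : σ i * (σ i * (ψ' i.castSucc - ψ' i.succ)) =
            σ i * (a i * Real.sign (φ' i) * (φ' i) ^ 2) := by rw [W']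
        rw [← mul_assoc, hσsq, one_mul] at h2
        linarith
      have hgap : σ i * (Real.sign (φ i) * (φ i) ^ 2 - Real.sign (φ' i) * (φ' i) ^ 2) > 0 := by
        have hd := hdev i hiL
        rcases hσ i with h | h
        · rw [h] at hd ⊢
          have : φ' i < φ i := by linarith
          have := signsq_strictMono this
          simp only at this
          linarith
        · rw [h] at hd ⊢
          have : φ i < φ' i := by linarith
          have := signsq_strictMono this
          simp only at this
          linarith
      have hai := ha i hiL
      have hlt : ψ i.succ < ψ' i.succ := by
        rw [hs, hs']
        nlinarith
      exact ⟨hlt.le, fun _ => hlt⟩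
    · -- compressor edge
      have C := hsol.2.2 i hiL
      have C' := hsol'.2.2 i hiL
      have hαi := hα i hiL
      have hcond : (ψ 0 < ψ' 0 ∨ ∃ i' ∈ L, (i' : ℕ) < (i.succ : ℕ)) →
          ψ i.castSucc < ψ' i.castSucc := by
        intro h
        apply hstrict
        rcases h with h | ⟨i', hi'L, hi'⟩
        · exact Or.inl h
        · refine Or.inr ⟨i', hi'L, ?_⟩
          simp only [Fin.val_succ] at hi'
          simp only [Fin.coe_castSucc]
          rcases Nat.lt_succ_iff_lt_or_eq.mp hi' with h' | h'
          · exact h'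
          · exact absurd (Fin.ext h' ▸ hi'L) hiL
      rcases hσ i with h | h
      · have e := C.1 h
        have e' := C'.1 h
        constructor
        · rw [e, e']; exact mul_le_mul_of_nonneg_left hle hαi.le
        · intro hc
          rw [e, e']
          exact (mul_lt_mul_iff_right₀ hαi).mpr (hcond hc)
      · have e := C.2 h
        have e' := C'.2 h
        constructor
        · have : α i * ψ i.succ ≤ α i * ψ' i.succ := by rw [← e, ← e']; exact hle
          exact (mul_le_mul_iff_right₀ hαi).mp this
        · intro hc
          have : α i * ψ i.succ < α i * ψ' i.succ := by rw [← e, ← e']; exact hcond hc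
          exact (mul_lt_mul_iff_right₀ hαi).mp this
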